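/- arXiv:2302.11026 — 2 statements merged into one kernel-verified Lean document; each statement's English description precedes it below -/
import Mathlib

section
/- Let Z̄ ∼ N(0, σ²I_n) in ℝ^n with σ² > 0, let C ∼ N(0, P'·I_n) be independent of Z̄ with P' > 0, and let a ∈ ℝ. Then P[‖a·C + Z̄‖² ≤ ‖Z̄‖²] ≤ (1 + a²P'/(4σ²))^{−n/2}. -/
open MeasureTheory ProbabilityTheory Real
open scoped NNReal ENNReal
set_option maxHeartbeats 1000000

private lemma aux_integrable_exp_quad {t : ℝ} (ht : 0 < t) (b : ℝ) :
    Integrable fun x : ℝ => rexp (-t*x^2 + b*x) := by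
  have h : ∀ x : ℝ, rexp (-t*x^2 + b*x) = rexp (b^2/(4*t)) * rexp (-t*(x - b/(2*t))^2) := by
    intro x
    rw [← Real.exp_add]
    congr 1
    field_simp
    ring
  simp_rw [h]
  exact ((integrable_exp_neg_mul_sq ht).comp_sub_right (b/(2*t))).const_mul _

private lemma aux_integral_exp_quad {t : ℝ} (ht : 0 < t) (b : ℝ) :
    ∫ x : ℝ, rexp (-t*x^2 + b*x) = Real.sqrt (π/t) * rexp (b^2/(4*t)) := by
  have h : ∀ x : ℝ, rexp (-t*x^2 + b*x) = rexp (b^2/(4*t)) * rexp (-t*(x - b/(2*t))^2) := by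
    intro x
    rw [← Real.exp_add]
    congr 1
    field_simp
    ring
  simp_rw [h]
  rw [MeasureTheory.integral_const_mul,
    integral_sub_right_eq_self (fun x => rexp (-t*x^2)) (b/(2*t)),
    integral_gaussian, mul_comm]

private lemma aux_gauss_rw {v : ℝ} (hv : 0 < v) (g : ℝ → ℝ) :
    ∫ x, g x ∂(gaussianReal 0 v.toNNReal)
      = ∫ x, gaussianPDFReal 0 v.toNNReal x * g x := by
  have hv' : v.toNNReal ≠ 0 := by simp [Real.toNNReal_eq_zero, not_le, hv]
  rw [gaussianReal_of_var_ne_zero 0 hv']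
  have : gaussianPDF 0 v.toNNReal
      = fun x => ((Real.toNNReal (gaussianPDFReal 0 v.toNNReal x) : ℝ≥0∞)) := by
    ext x; rfl
  rw [this, integral_withDensity_eq_integral_smul
    ((measurable_gaussianPDFReal 0 v.toNNReal).real_toNNReal) g]
  congr 1
  ext x
  simp [NNReal.smul_def, Real.coe_toNNReal _ (gaussianPDFReal_nonneg 0 v.toNNReal x)]

private lemma aux_gauss_integrable {v : ℝ} (hv : 0 < v) {t : ℝ} (ht : 0 ≤ t) (b : ℝ) :
    Integrable (fun x => rexp (-t*x^2 + b*x)) (gaussianReal 0 v.toNNReal) := by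
  have hv' : v.toNNReal ≠ 0 := by simp [Real.toNNReal_eq_zero, not_le, hv]
  have hvc : (v.toNNReal : ℝ) = v := Real.coe_toNNReal _ hv.le
  rw [gaussianReal_of_var_ne_zero 0 hv']
  have : gaussianPDF 0 v.toNNReal
      = fun x => ((Real.toNNReal (gaussianPDFReal 0 v.toNNReal x) : ℝ≥0∞)) := by
    ext x; rfl
  rw [this, integrable_withDensity_iff_integrable_smul
    ((measurable_gaussianPDFReal 0 v.toNNReal).real_toNNReal)]
  have hT : 0 < t + (2*v)⁻¹ := by positivity
  have heq : ∀ x : ℝ, (Real.toNNReal (gaussianPDFReal 0 v.toNNReal x)) • rexp (-t*x^2 + b*x)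
      = (Real.sqrt (2*π*v))⁻¹ * rexp (-(t + (2*v)⁻¹)*x^2 + b*x) := by
    intro x
    rw [NNReal.smul_def, smul_eq_mul, Real.coe_toNNReal _ (gaussianPDFReal_nonneg 0 v.toNNReal x),
      gaussianPDFReal, hvc]
    rw [mul_assoc, ← Real.exp_add]
    congr 2
    field_simp
    ring
  simp_rw [heq]
  exact (aux_integrable_exp_quad hT b).const_mul _

private lemma aux_gauss_integral {v : ℝ} (hv : 0 < v) {t : ℝ} (ht : 0 ≤ t) (b : ℝ) :
    ∫ x, rexp (-t*x^2 + b*x) ∂(gaussianReal 0 v.toNNReal)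
      = (Real.sqrt (1+2*t*v))⁻¹ * rexp (b^2*v/(2*(1+2*t*v))) := by
  have hvc : (v.toNNReal : ℝ) = v := Real.coe_toNNReal _ hv.le
  have hT : 0 < t + (2*v)⁻¹ := by positivity
  rw [aux_gauss_rw hv]
  have heq : ∀ x : ℝ, gaussianPDFReal 0 v.toNNReal x * rexp (-t*x^2 + b*x)
      = (Real.sqrt (2*π*v))⁻¹ * rexp (-(t + (2*v)⁻¹)*x^2 + b*x) := by
    intro x
    rw [gaussianPDFReal, hvc, mul_assoc, ← Real.exp_add]
    congr 2
    field_simp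
    ring
  simp_rw [heq]
  rw [MeasureTheory.integral_const_mul, aux_integral_exp_quad hT b]
  have h1 : 0 < 1 + 2*t*v := by positivity
  have hexp : b^2/(4*(t + (2*v)⁻¹)) = b^2*v/(2*(1+2*t*v)) := by
    field_simp
    ring
  rw [hexp]
  have hs : (Real.sqrt (2*π*v))⁻¹ * Real.sqrt (π/(t + (2*v)⁻¹)) = (Real.sqrt (1+2*t*v))⁻¹ := by
    rw [← Real.sqrt_inv, ← Real.sqrt_mul (by positivity)]
    rw [eq_comm, inv_eq_iff_eq_inv, ← Real.sqrt_inv]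
    congr 1
    field_simp
    ring
  rw [← mul_assoc, hs]

private lemma aux_pi_integrable {n : ℕ} (ν : Measure ℝ) [SigmaFinite ν] (g : Fin n → ℝ → ℝ)
    (hg : ∀ i, Integrable (g i) ν) :
    Integrable (fun x : Fin n → ℝ => ∏ i, g i (x i)) (Measure.pi fun _ => ν) := by
  letI : MeasureSpace ℝ := ⟨ν⟩
  exact Integrable.fintype_prod (𝕜 := ℝ) hg

private lemma aux_pi_integral {n : ℕ} (ν : Measure ℝ) [SigmaFinite ν] (g : Fin n → ℝ → ℝ) :
    ∫ x : Fin n → ℝ, ∏ i, g i (x i) ∂(Measure.pi fun _ => ν) = ∏ i, ∫ x, g i x ∂ν := by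
  letI : MeasureSpace ℝ := ⟨ν⟩
  exact integral_fintype_prod_eq_prod (𝕜 := ℝ) (fun i => g i)

/-- For independent `Z̄ ~ N(0, σ² I_n)` and `C ~ N(0, P' I_n)`, and any `a ∈ ℝ`,
`P[‖aC + Z̄‖² ≤ ‖Z̄‖²] ≤ (1 + a²P'/(4σ²))^{-n/2}`. -/
theorem stmt6 (n : ℕ) (hn : 0 < n) (σ2 P' a : ℝ) (hσ2 : 0 < σ2) (hP : 0 < P') :
    (((Measure.pi fun _ : Fin n => gaussianReal 0 (Real.toNNReal σ2)).prod
        (Measure.pi fun _ : Fin n => gaussianReal 0 (Real.toNNReal P')))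
        {p | ∑ i, (a * p.2 i + p.1 i) ^ 2 ≤ ∑ i, (p.1 i) ^ 2}).toReal
      ≤ (1 + a ^ 2 * P' / (4 * σ2)) ^ (-(n : ℝ) / 2) := by
  set μZ := Measure.pi fun _ : Fin n => gaussianReal 0 (Real.toNNReal σ2) with hμZ
  set μC := Measure.pi fun _ : Fin n => gaussianReal 0 (Real.toNNReal P') with hμC
  set lam : ℝ := (4*σ2)⁻¹ with hlam
  set q : ℝ := a^2/(8*σ2) with hq
  have hlam0 : 0 < lam := by rw [hlam]; positivity
  have hq0 : 0 ≤ q := by rw [hq]; positivity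
  set f : ℝ → ℝ → ℝ := fun c z => rexp (lam * (z^2 - (a*c+z)^2)) with hf
  set F : (Fin n → ℝ) × (Fin n → ℝ) → ℝ := fun p => ∏ i, f (p.2 i) (p.1 i) with hF
  set S : Set ((Fin n → ℝ) × (Fin n → ℝ)) :=
    {p | ∑ i, (a * p.2 i + p.1 i) ^ 2 ≤ ∑ i, (p.1 i) ^ 2} with hS
  -- rewriting f as a standard quadratic exponential
  have hfz : ∀ c : ℝ, (fun z => f c z)
      = fun z => rexp (-(lam*a^2*c^2)) * rexp (-(0:ℝ)*z^2 + (-(2*lam*a*c))*z) := by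
    intro c
    funext z
    show rexp (lam * (z^2 - (a*c+z)^2)) = _
    rw [← Real.exp_add]
    congr 1
    ring
  -- one-dimensional z-integral facts
  have hz_int : ∀ c : ℝ, Integrable (fun z => f c z) (gaussianReal 0 (Real.toNNReal σ2)) := by
    intro c
    rw [hfz c]
    exact (aux_gauss_integrable hσ2 le_rfl _).const_mul _
  have hz_val : ∀ c : ℝ, ∫ z, f c z ∂(gaussianReal 0 (Real.toNNReal σ2)) = rexp (-(q*c^2)) := by
    intro c
    rw [hfz c, MeasureTheory.integral_const_mul, aux_gauss_integral hσ2 le_rfl _]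
    have h1 : 1 + 2*(0:ℝ)*σ2 = 1 := by ring
    rw [h1, Real.sqrt_one, inv_one, one_mul, ← Real.exp_add]
    congr 1
    rw [hlam, hq]
    field_simp
    ring
  -- one-dimensional c-integral facts
  have hc_eq : (fun c : ℝ => rexp (-(q*c^2))) = fun c => rexp (-q*c^2 + 0*c) := by
    funext c; congr 1; ring
  have hc_int : Integrable (fun c => rexp (-(q*c^2))) (gaussianReal 0 (Real.toNNReal P')) := by
    rw [hc_eq]; exact aux_gauss_integrable hP hq0 0
  set K : ℝ := (Real.sqrt (1+2*q*P'))⁻¹ with hK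
  have hc_val : ∫ c, rexp (-(q*c^2)) ∂(gaussianReal 0 (Real.toNNReal P')) = K := by
    rw [hc_eq, aux_gauss_integral hP hq0 0]
    norm_num
    exact hK.symm
  -- continuity and measurability
  have hFcont : Continuous F := by
    apply continuous_finset_prod
    intro i _
    show Continuous fun p : (Fin n → ℝ) × (Fin n → ℝ) =>
      rexp (lam * ((p.1 i)^2 - (a * p.2 i + p.1 i)^2))
    fun_prop
  have hSm : MeasurableSet S := by
    rw [hS]
    apply measurableSet_le <;> fun_prop
  have hFpos : ∀ p, 0 < F p := fun p => Finset.prod_pos fun i _ => Real.exp_pos _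
  have hnorm : ∀ p : (Fin n → ℝ) × (Fin n → ℝ), ‖F p‖ = F p := fun p =>
    Real.norm_of_nonneg (hFpos p).le
  -- the z-section integral of F
  have hsec_val : ∀ c : Fin n → ℝ,
      ∫ z, F (z, c) ∂μZ = ∏ i, rexp (-(q*(c i)^2)) := by
    intro c
    have h0 : (fun z : Fin n → ℝ => F (z, c))
        = fun z => ∏ i, (fun i z => f (c i) z) i (z i) := rfl
    rw [h0, hμZ, aux_pi_integral]
    exact Finset.prod_congr rfl fun i _ => hz_val (c i)
  have hsec_int : ∀ c : Fin n → ℝ, Integrable (fun z => F (z, c)) μZ := by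
    intro c
    have h0 : (fun z : Fin n → ℝ => F (z, c))
        = fun z => ∏ i, (fun i z => f (c i) z) i (z i) := rfl
    rw [h0, hμZ]
    exact aux_pi_integrable _ (fun i z => f (c i) z) (fun i => hz_int (c i))
  -- integrability of F on the product
  have hFmeas : AEStronglyMeasurable F (μZ.prod μC) := hFcont.aestronglyMeasurable
  have hbound : ∀ c : Fin n → ℝ, ∏ i, rexp (-(q*(c i)^2)) ≤ 1 := by
    intro c
    apply Finset.prod_le_one (fun i _ => (Real.exp_pos _).le)
    intro i _
    rw [Real.exp_le_one_iff]
    have h0 : 0 ≤ q*(c i)^2 := by positivity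
    linarith
  have hFint : Integrable F (μZ.prod μC) := by
    rw [integrable_prod_iff' hFmeas]
    constructor
    · exact Filter.Eventually.of_forall hsec_int
    · have heq2 : (fun c : Fin n → ℝ => ∫ z, ‖F (z, c)‖ ∂μZ)
          = fun c => ∏ i, rexp (-(q*(c i)^2)) := by
        funext c
        simp_rw [hnorm]
        exact hsec_val c
      rw [heq2]
      apply Integrable.mono' (integrable_const (1:ℝ))
      · apply Continuous.aestronglyMeasurable
        apply continuous_finset_prod
        intro i _
        fun_prop
      · apply Filter.Eventually.of_forall
        intro c
        rw [Real.norm_of_nonneg (Finset.prod_nonneg fun i _ => (Real.exp_pos _).le)]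
        exact hbound c
  -- Chernoff bound
  have hchern : ((μZ.prod μC) S).toReal ≤ ∫ p, F p ∂(μZ.prod μC) := by
    show (μZ.prod μC).real S ≤ _
    rw [← integral_indicator_one hSm]
    apply integral_mono ((integrable_const (1:ℝ)).indicator hSm) hFint
    intro p
    by_cases hp : p ∈ S
    · rw [Set.indicator_of_mem hp]
      show (1:ℝ) ≤ F p
      have hFe : F p = rexp (∑ i, lam * ((p.1 i)^2 - (a*p.2 i + p.1 i)^2)) := by
        rw [Real.exp_sum]
      have hsum : ∑ i, lam * ((p.1 i)^2 - (a*p.2 i + p.1 i)^2)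
          = lam * ((∑ i, (p.1 i)^2) - ∑ i, (a*p.2 i + p.1 i)^2) := by
        rw [← Finset.sum_sub_distrib, ← Finset.mul_sum]
      rw [hFe]
      apply Real.one_le_exp
      rw [hsum]
      have hp' : ∑ i, (a * p.2 i + p.1 i)^2 ≤ ∑ i, (p.1 i)^2 := hp
      exact mul_nonneg hlam0.le (sub_nonneg.mpr hp')
    · rw [Set.indicator_of_notMem hp]
      exact (hFpos p).le
  -- value of the integral
  have hval : ∫ p, F p ∂(μZ.prod μC) = K ^ n := by
    rw [MeasureTheory.integral_prod_symm F hFint]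
    have h1 : (fun c : Fin n → ℝ => ∫ z, F (z, c) ∂μZ)
        = fun c => ∏ i, (fun _ c => rexp (-(q*c^2))) i (c i) := by
      funext c
      exact hsec_val c
    rw [h1, hμC,
      aux_pi_integral (gaussianReal 0 (Real.toNNReal P')) (fun _ c => rexp (-(q*c^2)))]
    simp_rw [hc_val]
    rw [Finset.prod_const, Finset.card_univ, Fintype.card_fin]
  -- final algebra
  have hB : 2*q*P' = a^2*P'/(4*σ2) := by rw [hq]; field_simp; ring
  have h1B : (0:ℝ) < 1 + a^2*P'/(4*σ2) := by positivity
  have hKval : K ^ n = (1 + a ^ 2 * P' / (4 * σ2)) ^ (-(n : ℝ) / 2) := by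
    rw [hK, hB, Real.sqrt_eq_rpow, ← Real.rpow_neg h1B.le, ← Real.rpow_natCast _ n,
      ← Real.rpow_mul h1B.le]
    congr 1
    push_cast
    ring
  calc ((μZ.prod μC) S).toReal ≤ ∫ p, F p ∂(μZ.prod μC) := hchern
    _ = K ^ n := hval
    _ = _ := hKval
end

section
/- Let A₁,…,A_M be events on a probability space and let B be a sub-σ-algebra (or conditioning random variable). Then P[⋃_{i=1}^M A_i] ≤ E[ min{1, Σ_{i=1}^M P[A_i | B]} ]. -/
open MeasureTheory

/-- Tightened union bound: `P[⋃ᵢ Aᵢ] ≤ E[min{1, Σᵢ P[Aᵢ | m]}]` for a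
sub-σ-algebra `m`. -/
theorem stmt12 {Ω : Type*} (m : MeasurableSpace Ω) {m0 : MeasurableSpace Ω} (μ : Measure Ω) [IsProbabilityMeasure μ]
    (hm : m ≤ m0)
    (M : ℕ) (A : Fin M → Set Ω) (hA : ∀ i, MeasurableSet (A i)) :
    (μ (⋃ i, A i)).toReal ≤
      ∫ ω, min 1 (∑ i, (μ[(A i).indicator (fun _ => (1 : ℝ)) | m]) ω) ∂μ := by
  classical
  letI : MeasurableSpace Ω := m0
  set U : Set Ω := ⋃ i, A i with hU
  have hA0 : ∀ i, MeasurableSet[m0] (A i) := fun i => hA i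
  have hUm : MeasurableSet[m0] U := MeasurableSet.iUnion hA0
  have hint : ∀ i, Integrable ((A i).indicator (fun _ => (1 : ℝ))) μ := fun i =>
    (integrable_const (1 : ℝ)).indicator (hA0 i)
  have hintU : Integrable (U.indicator (fun _ => (1 : ℝ))) μ :=
    (integrable_const (1 : ℝ)).indicator hUm
  -- μ U .toReal = ∫ condexp of indicator of U
  have h1 : (μ U).toReal = ∫ ω, (μ[U.indicator (fun _ => (1 : ℝ)) | m]) ω ∂μ := by
    rw [integral_condExp hm]
    have := integral_indicator_one (μ := μ) hUm
    exact this.symm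
  rw [h1]
  -- a.e. bounds
  have hle1 : (μ[U.indicator (fun _ => (1 : ℝ)) | m]) ≤ᵐ[μ] fun _ => (1 : ℝ) := by
    have := condExp_mono (m := m) (μ := μ) hintU (integrable_const (1 : ℝ))
      (Filter.Eventually.of_forall fun ω => Set.indicator_le' (fun _ _ => le_refl 1)
        (fun _ _ => zero_le_one) ω)
    refine this.trans ?_
    rw [condExp_const hm]
  have hlesum : (μ[U.indicator (fun _ => (1 : ℝ)) | m]) ≤ᵐ[μ]
      fun ω => ∑ i, (μ[(A i).indicator (fun _ => (1 : ℝ)) | m]) ω := by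
    have hmono : (μ[U.indicator (fun _ => (1 : ℝ)) | m]) ≤ᵐ[μ]
        μ[∑ i, (A i).indicator (fun _ => (1 : ℝ)) | m] := by
      have hintS : Integrable (∑ i, (A i).indicator (fun _ => (1 : ℝ))) μ := by
        have := integrable_finset_sum (μ := μ) (s := Finset.univ)
          (f := fun i => (A i).indicator (fun _ => (1 : ℝ))) fun i _ => hint i
        rwa [← Finset.sum_fn] at this
      refine condExp_mono hintU hintS (Filter.Eventually.of_forall fun ω => ?_)
      simp only [Finset.sum_apply]
      by_cases hω : ω ∈ U
      · obtain ⟨i, hi⟩ := Set.mem_iUnion.mp hω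
        simp only [Set.indicator_of_mem hω]
        calc (1 : ℝ) = (A i).indicator (fun _ => (1 : ℝ)) ω := by
              rw [Set.indicator_of_mem hi]
          _ ≤ ∑ j, (A j).indicator (fun _ => (1 : ℝ)) ω :=
              Finset.single_le_sum (fun j _ => Set.indicator_nonneg (fun _ _ => zero_le_one) ω)
                (Finset.mem_univ i)
      · simp only [Set.indicator_of_notMem hω]
        exact Finset.sum_nonneg fun j _ => Set.indicator_nonneg (fun _ _ => zero_le_one) ω
    refine hmono.trans ?_
    filter_upwards [condExp_finsetSum (μ := μ) (m := m)
      (f := fun i => (A i).indicator (fun _ => (1 : ℝ))) (s := Finset.univ)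
      fun i _ => hint i] with ω hω
    rw [hω, Finset.sum_apply]
  refine integral_mono_ae integrable_condExp ?_ ?_
  · have : Integrable ((fun _ => (1 : ℝ)) ⊓ fun ω =>
        ∑ i, (μ[(A i).indicator (fun _ => (1 : ℝ)) | m]) ω) μ :=
      (integrable_const 1).inf (integrable_finset_sum _ fun i _ => integrable_condExp)
    exact this
  · filter_upwards [hle1, hlesum] with ω h1' h2'
    exact le_min h1' h2'
end
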